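/- Let G = (V,E) be a finite simple graph, let b : E → ℝ be any edge weight function, and let L be the associated weighted Laplacian matrix. If S ⊆ V is not a dominating set of G, then there exists a nonzero vector θ : V → ℝ such that (Lθ)_j = 0 for every j ∈ S, and for every edge {u,v} ∈ E with θ_u ≠ θ_v, neither u nor v belongs to S. (Hence a set of protected buses admitting no undetectable attack must be a dominating set.) -/

import Mathlib

/-! The indicator vector of a vertex that `S` does not dominate is an undetectable attack:
every column of the Laplacian is supported on the closed neighbourhood of its vertex, which
misses `S`, and the only edges across which the indicator changes are those at that vertex. -/

open Matrix

/-- `D` is a dominating set of `G`: every vertex not in `D` is adjacent to a vertex of `D`. -/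
def IsDominating {V : Type*} (G : SimpleGraph V) (D : Set V) : Prop :=
  ∀ v ∉ D, ∃ u ∈ D, G.Adj v u

/-- The weighted Laplacian of `G` with edge weights `b`: `L u v = -b({u,v})` for adjacent
`u ≠ v`, `0` for nonadjacent `u ≠ v`, and `L u u = ∑_{w ~ u} b({u,w})`. -/
noncomputable def weightedLaplacian {V : Type*} [Fintype V] [DecidableEq V]
    (G : SimpleGraph V) [DecidableRel G.Adj] (b : Sym2 V → ℝ) : Matrix V V ℝ :=
  Matrix.of fun u v =>
    if u = v then ∑ w ∈ G.neighborFinset u, b s(u, w)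
    else if G.Adj u v then -b s(u, v) else 0

theorem exists_notMem_forall_not_adj_of_not_isDominating {V : Type*} {G : SimpleGraph V} {S : Set V}
    (hS : ¬ IsDominating G S) : ∃ v ∉ S, ∀ u ∈ S, ¬ G.Adj v u := by
  simpa [IsDominating] using hS

theorem weightedLaplacian_apply_of_ne_of_not_adj {V : Type*} [Fintype V] [DecidableEq V]
    (G : SimpleGraph V) [DecidableRel G.Adj] (b : Sym2 V → ℝ) {u v : V} (huv : u ≠ v)
    (h : ¬ G.Adj u v) : weightedLaplacian G b u v = 0 := by
  simp [weightedLaplacian, huv, h]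

theorem Pi.eq_or_eq_of_single_apply_ne {ι M : Type*} [DecidableEq ι] [Zero M] {i j k : ι}
    {x : M} (h : (Pi.single i x : ι → M) j ≠ (Pi.single i x : ι → M) k) : j = i ∨ k = i := by
  by_contra! hji
  simp [hji.1, hji.2] at h

/-- if `S` is not a dominating set of `G`, then for any edge weights `b`
there is a nonzero vector `θ` of fictitious phasors such that `(Lθ)_j = 0` for every
`j ∈ S` and every edge `{u,v}` with `θ_u ≠ θ_v` has both endpoints outside `S`
(an undetectable attack avoiding all protected buses). -/
theorem not_dominating_admits_undetectable_attack {V : Type*} [Fintype V] [DecidableEq V]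
    (G : SimpleGraph V) [DecidableRel G.Adj] (b : Sym2 V → ℝ) (S : Set V)
    (hS : ¬ IsDominating G S) :
    ∃ θ : V → ℝ, θ ≠ 0 ∧ (∀ j ∈ S, (weightedLaplacian G b *ᵥ θ) j = 0) ∧
      ∀ u v, G.Adj u v → θ u ≠ θ v → u ∉ S ∧ v ∉ S := by
  obtain ⟨v₀, hv₀, hfar⟩ := exists_notMem_forall_not_adj_of_not_isDominating hS
  refine ⟨Pi.single v₀ 1, by simp, fun j hj => ?_, fun u v huv hne => ?_⟩
  · rw [mulVec_single_one, col_apply]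
    exact weightedLaplacian_apply_of_ne_of_not_adj G b (ne_of_mem_of_not_mem hj hv₀)
      fun h => hfar j hj h.symm
  · rcases Pi.eq_or_eq_of_single_apply_ne hne with rfl | rfl
    · exact ⟨hv₀, fun hv => hfar v hv huv⟩
    · exact ⟨fun hu => hfar u hu huv.symm, hv₀⟩
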